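/- Let $u, u_k \in BS^p(\mathbb{R},X)$ for all $k\in\mathbb{N}$, and suppose the family $\{u_k : k\in\mathbb{N}\}$ is Stepanov $p$-uniformly integrable. Then $\lim_{k\to\infty}\|u_k - u\|_{S^p} = 0$ if and only if for every $\varepsilon>0$, $\lim_{k\to\infty}\sup_{t\in\mathbb{R}} \mathrm{meas}\{s\in(t,t+1) : \|u_k(s)-u(s)\| \ge \varepsilon\} = 0$. -/

import Mathlib

/-! Markov's inequality on each window `(t, t + 1)`, with the Stepanov norm bounding every window
integral, gives the forward implication. Conversely, convergence in measure on the windows lets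
Fatou's lemma (along an a.e. convergent subsequence) transfer the uniform integrability of the `uₖ`
to `u`. On a window, the set where `‖uₖ - u‖ ≥ η` then has measure below the uniform-integrability
threshold for large `k`, uniformly in `t`; the integral of `‖uₖ - u‖ᵖ ≤ 2ᵖ⁻¹ (‖uₖ‖ᵖ + ‖u‖ᵖ)` over it
is small, and on its complement the integrand is below `ηᵖ`. -/

open MeasureTheory Set Filter Topology
open scoped ENNReal

variable {X : Type*} [NormedAddCommGroup X]

/-- The `L^p(0,1;X)`-norm of the Bochner transform `u^b(t)`, raised to the power `p`:
`‖u^b(t)‖_{L^p}^p = ∫_0^1 ‖u(t+θ)‖^p dθ`. -/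
noncomputable def SIntegral (p : ℝ) (u : ℝ → X) (t : ℝ) : ℝ :=
  ∫ θ in Ioo (0:ℝ) 1, ‖u (t + θ)‖ ^ p

/-- The Stepanov norm `‖u‖_{S^p} = sup_t ‖u^b(t)‖_{L^p}`. -/
noncomputable def SNorm (p : ℝ) (u : ℝ → X) : ℝ :=
  ⨆ t : ℝ, (SIntegral p u t) ^ (1 / p)

/-- `u ∈ L^p_loc(ℝ,X)`. -/
def MemLploc (p : ℝ) (u : ℝ → X) : Prop :=
  AEStronglyMeasurable u volume ∧ LocallyIntegrable (fun t => ‖u t‖ ^ p) volume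

/-- `u ∈ BS^p(ℝ,X)`: Stepanov bounded functions. -/
def MemBSp (p : ℝ) (u : ℝ → X) : Prop :=
  MemLploc p u ∧ BddAbove (Set.range (SIntegral p u))

/-- `u ∈ S^p_{aa}(ℝ,X)`: the Bochner transform `u^b` is almost automorphic with values in
`L^p(0,1;X)`; convergence in `L^p(0,1;X)` is expressed via the integrals
`∫_0^1 ‖u(t+s_k+θ) - v(t)(θ)‖^p dθ → 0`. -/
def StepanovAA (p : ℝ) (u : ℝ → X) : Prop :=
  MemLploc p u ∧
  ∀ s : ℕ → ℝ, ∃ φ : ℕ → ℕ, StrictMono φ ∧ ∃ v : ℝ → ℝ → X,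
    (∀ t : ℝ, Tendsto (fun k => ∫ θ in Ioo (0:ℝ) 1, ‖u (t + s (φ k) + θ) - v t θ‖ ^ p)
      atTop (𝓝 0)) ∧
    (∀ t : ℝ, Tendsto (fun k => ∫ θ in Ioo (0:ℝ) 1, ‖v (t - s (φ k)) θ - u (t + θ)‖ ^ p)
      atTop (𝓝 0))

/-- `u ∈ S^p_{ap}(ℝ,X)`: the Bochner transform `u^b` is Bohr almost periodic with values in
`L^p(0,1;X)`. -/
def StepanovAP (p : ℝ) (u : ℝ → X) : Prop :=
  MemLploc p u ∧
  ∀ ε > (0:ℝ), ∃ ℓ > (0:ℝ), ∀ α : ℝ, ∃ τ ∈ Icc α (α + ℓ),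
    ∀ t : ℝ, (∫ θ in Ioo (0:ℝ) 1, ‖u (t + τ + θ) - u (t + θ)‖ ^ p) ≤ ε ^ p

/-- A family `H ⊂ L^p_loc(ℝ,X)` is Stepanov tight. -/
def StepanovTight (H : Set (ℝ → X)) : Prop :=
  ∀ ε > (0:ℝ), ∃ K : Set X, IsCompact K ∧ ∀ u ∈ H, ∀ t : ℝ,
    volume {s ∈ Ioo t (t + 1) | u s ∉ K} < ENNReal.ofReal ε

/-- A family `H ⊂ L^p_loc(ℝ,X)` is Stepanov `p`-uniformly integrable. -/
def StepanovUI (p : ℝ) (H : Set (ℝ → X)) : Prop :=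
  ∀ ε > (0:ℝ), ∃ δ > (0:ℝ), ∀ u ∈ H, ∀ t : ℝ, ∀ E : Set ℝ, MeasurableSet E →
    E ⊆ Ioo t (t + 1) → volume E ≤ ENNReal.ofReal δ →
    (∫ s in E, ‖u s‖ ^ p) ≤ ε

/-- Bohr almost periodic functions `AP(ℝ,E)`. -/
def IsAlmostPeriodic {E : Type*} [NormedAddCommGroup E] (v : ℝ → E) : Prop :=
  Continuous v ∧ ∀ ε > (0:ℝ), ∃ ℓ > (0:ℝ), ∀ α : ℝ, ∃ τ ∈ Icc α (α + ℓ),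
    ∀ t : ℝ, ‖v (t + τ) - v t‖ ≤ ε

/-- Almost automorphic functions `AA(ℝ,E)`. -/
def IsAlmostAutomorphic {E : Type*} [NormedAddCommGroup E] (v : ℝ → E) : Prop :=
  Continuous v ∧ ∀ s : ℕ → ℝ, ∃ φ : ℕ → ℕ, StrictMono φ ∧ ∃ w : ℝ → E,
    (∀ t : ℝ, Tendsto (fun k => v (t + s (φ k))) atTop (𝓝 (w t))) ∧
    (∀ t : ℝ, Tendsto (fun k => w (t - s (φ k))) atTop (𝓝 (v t)))

section MeasureLemmas

variable {α : Type*} [MeasurableSpace α] {μ : Measure α}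

lemma norm_sub_rpow_le {p : ℝ} (hp : 1 ≤ p) (a b : X) :
    ‖a - b‖ ^ p ≤ 2 ^ (p - 1) * (‖a‖ ^ p + ‖b‖ ^ p) := by
  calc ‖a - b‖ ^ p ≤ (‖a‖ + ‖b‖) ^ p :=
        Real.rpow_le_rpow (norm_nonneg _) (norm_sub_le a b) (by linarith)
    _ ≤ 2 ^ (p - 1) * (‖a‖ ^ p + ‖b‖ ^ p) := by
        exact_mod_cast NNReal.rpow_add_le_mul_rpow_add_rpow ‖a‖₊ ‖b‖₊ hp

lemma meas_norm_ge_le_integral_rpow_div {p ε : ℝ} (hp : 0 < p) (hε : 0 < ε) {f : α → X}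
    (hf : Integrable (fun x => ‖f x‖ ^ p) μ) :
    μ {x | ε ≤ ‖f x‖} ≤ ENNReal.ofReal ((∫ x, ‖f x‖ ^ p ∂μ) / ε ^ p) := by
  have hεp : 0 < ε ^ p := Real.rpow_pos_of_pos hε p
  have hset : {x | ε ≤ ‖f x‖} = {x | ENNReal.ofReal (ε ^ p) ≤ ENNReal.ofReal (‖f x‖ ^ p)} := by
    ext x
    rw [mem_ofPred_eq, mem_ofPred_eq, ENNReal.ofReal_le_ofReal_iff (by positivity),
      Real.rpow_le_rpow_iff hε.le (norm_nonneg _) hp]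
  rw [hset, ENNReal.ofReal_div_of_pos hεp,
    ofReal_integral_eq_lintegral_ofReal hf (ae_of_all _ fun x => by positivity)]
  exact meas_ge_le_lintegral_div hf.aemeasurable.ennreal_ofReal
    (ENNReal.ofReal_pos.2 hεp).ne' ENNReal.ofReal_ne_top

lemma integral_norm_rpow_le_of_tendstoInMeasure {p c : ℝ} (hp : 0 < p) {g : ℕ → α → X}
    {f : α → X} (hgf : TendstoInMeasure μ g atTop f) (hf : AEStronglyMeasurable f μ)
    (hg : ∀ n, Integrable (fun x => ‖g n x‖ ^ p) μ) (hc : ∀ n, ∫ x, ‖g n x‖ ^ p ∂μ ≤ c) :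
    ∫ x, ‖f x‖ ^ p ∂μ ≤ c := by
  have hcont : Continuous fun y : X => ENNReal.ofReal (‖y‖ ^ p) :=
    ENNReal.continuous_ofReal.comp ((Real.continuous_rpow_const hp.le).comp continuous_norm)
  obtain ⟨ns, -, hns⟩ := hgf.exists_seq_tendsto_ae
  have hc0 : 0 ≤ c := (integral_nonneg fun x => by positivity).trans (hc 0)
  have hlint : ∫⁻ x, ENNReal.ofReal (‖f x‖ ^ p) ∂μ ≤ ENNReal.ofReal c :=
    calc ∫⁻ x, ENNReal.ofReal (‖f x‖ ^ p) ∂μ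
        = ∫⁻ x, liminf (fun j => ENNReal.ofReal (‖g (ns j) x‖ ^ p)) atTop ∂μ := by
          refine lintegral_congr_ae ?_
          filter_upwards [hns] with x hx
          exact ((hcont.tendsto _).comp hx).liminf_eq.symm
      _ ≤ liminf (fun j => ∫⁻ x, ENNReal.ofReal (‖g (ns j) x‖ ^ p) ∂μ) atTop :=
          lintegral_liminf_le' fun j => (hg (ns j)).aemeasurable.ennreal_ofReal
      _ ≤ ENNReal.ofReal c := by
          refine liminf_le_of_frequently_le' (Frequently.of_forall fun j => ?_)
          rw [← ofReal_integral_eq_lintegral_ofReal (hg (ns j))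
            (ae_of_all _ fun x => by positivity)]
          exact ENNReal.ofReal_le_ofReal (hc (ns j))
  rw [integral_eq_lintegral_of_nonneg_ae (ae_of_all _ fun x => by positivity)
    ((Real.continuous_rpow_const hp.le).comp_aestronglyMeasurable hf.norm)]
  exact ENNReal.toReal_le_of_le_ofReal hc0 hlint

lemma setIntegral_norm_sub_rpow_le {p η : ℝ} (hp : 1 ≤ p) (hη : 0 ≤ η) {v w : α → X}
    {W E : Set α} (hW : MeasurableSet W) (hE : MeasurableSet E) (hEW : E ⊆ W) (hWμ : μ W ≠ ∞)
    (hvw : IntegrableOn (fun s => ‖v s - w s‖ ^ p) W μ)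
    (hv : IntegrableOn (fun s => ‖v s‖ ^ p) E μ) (hw : IntegrableOn (fun s => ‖w s‖ ^ p) E μ)
    (hsmall : ∀ s ∈ W \ E, ‖v s - w s‖ < η) :
    ∫ s in W, ‖v s - w s‖ ^ p ∂μ ≤
      2 ^ (p - 1) * ((∫ s in E, ‖v s‖ ^ p ∂μ) + ∫ s in E, ‖w s‖ ^ p ∂μ) + η ^ p * μ.real W := by
  have hWE : μ (W \ E) ≠ ∞ := ne_top_of_le_ne_top hWμ (measure_mono sdiff_subset)
  have hbad : ∫ s in E, ‖v s - w s‖ ^ p ∂μ ≤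
      2 ^ (p - 1) * ((∫ s in E, ‖v s‖ ^ p ∂μ) + ∫ s in E, ‖w s‖ ^ p ∂μ) := by
    rw [← integral_add hv hw, ← integral_const_mul]
    exact setIntegral_mono_on (hvw.mono_set hEW) ((hv.add hw).const_mul _) hE
      fun s _ => norm_sub_rpow_le hp (v s) (w s)
  have hgood : ∫ s in W \ E, ‖v s - w s‖ ^ p ∂μ ≤ η ^ p * μ.real W :=
    calc ∫ s in W \ E, ‖v s - w s‖ ^ p ∂μ ≤ ∫ _ in W \ E, η ^ p ∂μ := by
          refine setIntegral_mono_on (hvw.mono_set sdiff_subset) (integrableOn_const hWE)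
            (hW.diff hE) fun s hs => ?_
          exact Real.rpow_le_rpow (norm_nonneg _) (hsmall s hs).le (by linarith)
      _ = η ^ p * μ.real (W \ E) := by rw [setIntegral_const, smul_eq_mul, mul_comm]
      _ ≤ η ^ p * μ.real W := by
          gcongr ?_ * ?_
          exact measureReal_mono sdiff_subset hWμ
  rw [← integral_inter_add_sdiff hE hvw, inter_eq_self_of_subset_right hEW]
  exact add_le_add hbad hgood

end MeasureLemmas

section Stepanov

variable {p : ℝ}

lemma SIntegral_eq_setIntegral (u : ℝ → X) (t : ℝ) :
    SIntegral p u t = ∫ s in Ioo t (t + 1), ‖u s‖ ^ p := by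
  simpa [SIntegral] using (measurePreserving_add_left volume t).setIntegral_preimage_emb
    (measurableEmbedding_addLeft t) (fun s => ‖u s‖ ^ p) (Ioo t (t + 1))

lemma SIntegral_nonneg (u : ℝ → X) (t : ℝ) : 0 ≤ SIntegral p u t :=
  setIntegral_nonneg measurableSet_Ioo fun _ _ => by positivity

lemma MemLploc.integrableOn_window {u : ℝ → X} (hu : MemLploc p u) (t : ℝ) :
    IntegrableOn (fun s => ‖u s‖ ^ p) (Ioo t (t + 1)) :=
  (hu.2.integrableOn_isCompact isCompact_Icc).mono_set Ioo_subset_Icc_self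

lemma MemLploc.sub (hp : 1 ≤ p) {u v : ℝ → X} (hu : MemLploc p u) (hv : MemLploc p v) :
    MemLploc p (u - v) := by
  refine ⟨hu.1.sub hv.1, ((hu.2.add hv.2).smul (2 ^ (p - 1) : ℝ)).mono ?_ (ae_of_all _ ?_)⟩
  · exact (Real.continuous_rpow_const (by linarith)).comp_aestronglyMeasurable (hu.1.sub hv.1).norm
  · intro s
    dsimp only [Pi.smul_apply, Pi.add_apply, Pi.sub_apply, smul_eq_mul]
    rw [Real.norm_of_nonneg (by positivity), Real.norm_of_nonneg (by positivity)]
    exact norm_sub_rpow_le hp (u s) (v s)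

lemma MemBSp.sub (hp : 1 ≤ p) {u v : ℝ → X} (hu : MemBSp p u) (hv : MemBSp p v) :
    MemBSp p (u - v) := by
  obtain ⟨M, hM⟩ := hu.2
  obtain ⟨N, hN⟩ := hv.2
  refine ⟨hu.1.sub hp hv.1, 2 ^ (p - 1) * (M + N), ?_⟩
  rintro _ ⟨t, rfl⟩
  have hu' := hu.1.integrableOn_window t
  have hv' := hv.1.integrableOn_window t
  calc SIntegral p (u - v) t ≤ 2 ^ (p - 1) * (SIntegral p u t + SIntegral p v t) := by
        simp only [SIntegral_eq_setIntegral, Pi.sub_apply]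
        rw [← integral_add hu' hv', ← integral_const_mul]
        exact setIntegral_mono_on ((hu.1.sub hp hv.1).integrableOn_window t)
          ((hu'.add hv').const_mul _) measurableSet_Ioo fun s _ => norm_sub_rpow_le hp (u s) (v s)
    _ ≤ 2 ^ (p - 1) * (M + N) := by gcongr <;> [exact hM ⟨t, rfl⟩; exact hN ⟨t, rfl⟩]

lemma SNorm_nonneg (u : ℝ → X) : 0 ≤ SNorm p u :=
  Real.iSup_nonneg fun t => Real.rpow_nonneg (SIntegral_nonneg u t) _

lemma SIntegral_le_SNorm_rpow (hp : 0 < p) {u : ℝ → X} (hu : BddAbove (range (SIntegral p u)))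
    (t : ℝ) : SIntegral p u t ≤ SNorm p u ^ p := by
  have hroot : BddAbove (range fun t => SIntegral p u t ^ (1 / p)) := by
    obtain ⟨M, hM⟩ := hu
    refine ⟨M ^ (1 / p), ?_⟩
    rintro _ ⟨t, rfl⟩
    exact Real.rpow_le_rpow (SIntegral_nonneg u t) (hM ⟨t, rfl⟩) (by positivity)
  calc SIntegral p u t = (SIntegral p u t ^ (1 / p)) ^ p := by
        rw [← Real.rpow_mul (SIntegral_nonneg u t), one_div_mul_cancel hp.ne', Real.rpow_one]
    _ ≤ SNorm p u ^ p :=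
        Real.rpow_le_rpow (Real.rpow_nonneg (SIntegral_nonneg u t) _) (le_ciSup hroot t) hp.le

lemma SNorm_le_rpow_of_forall_SIntegral_le (hp : 0 < p) {u : ℝ → X} {c : ℝ}
    (h : ∀ t, SIntegral p u t ≤ c) : SNorm p u ≤ c ^ (1 / p) :=
  ciSup_le fun t => Real.rpow_le_rpow (SIntegral_nonneg u t) (h t) (by positivity)

lemma tendsto_SNorm_zero_of_forall_SIntegral_le (hp : 0 < p) {v : ℕ → ℝ → X}
    (h : ∀ η > 0, ∀ᶠ k in atTop, ∀ t, SIntegral p (v k) t ≤ η) :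
    Tendsto (fun k => SNorm p (v k)) atTop (𝓝 0) := by
  rw [NormedAddGroup.tendsto_nhds_zero]
  intro ε hε
  filter_upwards [h ((ε / 2) ^ p) (by positivity)] with k hk
  have hSNorm := SNorm_le_rpow_of_forall_SIntegral_le hp hk
  rw [← Real.rpow_mul (by positivity), mul_one_div_cancel hp.ne', Real.rpow_one] at hSNorm
  rw [Real.norm_of_nonneg (SNorm_nonneg _)]
  linarith

lemma measure_window_le_SNorm (hp : 0 < p) {v : ℝ → X} (hv : MemBSp p v) (t : ℝ) {ε : ℝ}
    (hε : 0 < ε) :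
    volume {s ∈ Ioo t (t + 1) | ε ≤ ‖v s‖} ≤ ENNReal.ofReal (SNorm p v ^ p / ε ^ p) := by
  rw [← ofPred_inter_eq_sep, ← Measure.restrict_apply' measurableSet_Ioo]
  refine (meas_norm_ge_le_integral_rpow_div hp hε (hv.1.integrableOn_window t)).trans ?_
  rw [← SIntegral_eq_setIntegral]
  gcongr
  exact SIntegral_le_SNorm_rpow hp hv.2 t

lemma tendsto_iSup_measure_window_of_tendsto_SNorm (hp : 0 < p) {v : ℕ → ℝ → X}
    (hv : ∀ k, MemBSp p (v k)) (h : Tendsto (fun k => SNorm p (v k)) atTop (𝓝 0)) {ε : ℝ}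
    (hε : 0 < ε) :
    Tendsto (fun k => ⨆ t : ℝ, volume {s ∈ Ioo t (t + 1) | ε ≤ ‖v k s‖}) atTop (𝓝 0) := by
  have hbound : Tendsto (fun k => ENNReal.ofReal (SNorm p (v k) ^ p / ε ^ p)) atTop (𝓝 0) := by
    simpa [Real.zero_rpow hp.ne'] using
      ENNReal.tendsto_ofReal ((h.rpow_const (Or.inr hp.le)).div_const (ε ^ p))
  exact tendsto_of_tendsto_of_tendsto_of_le_of_le tendsto_const_nhds hbound (fun _ => zero_le)
    fun k => iSup_le fun t => measure_window_le_SNorm hp (hv k) t hε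

lemma tendstoInMeasure_restrict_of_tendsto_iSup_measure_window {uk : ℕ → ℝ → X} {u : ℝ → X}
    (H : ∀ ε > (0:ℝ), Tendsto
      (fun k => ⨆ t : ℝ, volume {s ∈ Ioo t (t + 1) | ε ≤ ‖uk k s - u s‖}) atTop (𝓝 0))
    {t : ℝ} {E : Set ℝ} (hE : E ⊆ Ioo t (t + 1)) :
    TendstoInMeasure (volume.restrict E) uk atTop u := by
  rw [tendstoInMeasure_iff_norm]
  intro ε hε
  refine tendsto_of_tendsto_of_tendsto_of_le_of_le tendsto_const_nhds (H ε hε)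
    (fun _ => zero_le) fun k => ?_
  calc volume.restrict E {s | ε ≤ ‖uk k s - u s‖}
      ≤ volume.restrict (Ioo t (t + 1)) {s | ε ≤ ‖uk k s - u s‖} :=
        Measure.restrict_mono hE le_rfl _
    _ = volume {s ∈ Ioo t (t + 1) | ε ≤ ‖uk k s - u s‖} := by
        rw [Measure.restrict_apply' measurableSet_Ioo, ofPred_inter_eq_sep]
    _ ≤ ⨆ t : ℝ, volume {s ∈ Ioo t (t + 1) | ε ≤ ‖uk k s - u s‖} :=
        le_iSup (fun t => volume {s ∈ Ioo t (t + 1) | ε ≤ ‖uk k s - u s‖}) t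

lemma StepanovUI.insert_of_tendsto_iSup_measure_window (hp : 0 < p) {uk : ℕ → ℝ → X}
    {u : ℝ → X} (hUI : StepanovUI p (range uk)) (huk : ∀ k, MemLploc p (uk k))
    (hu : AEStronglyMeasurable u volume)
    (H : ∀ ε > (0:ℝ), Tendsto
      (fun k => ⨆ t : ℝ, volume {s ∈ Ioo t (t + 1) | ε ≤ ‖uk k s - u s‖}) atTop (𝓝 0)) :
    StepanovUI p (insert u (range uk)) := by
  intro ε hε
  obtain ⟨δ, hδ, hsmall⟩ := hUI ε hε
  refine ⟨δ, hδ, ?_⟩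
  rintro v (rfl | ⟨k, rfl⟩) t E hE hEW hvol
  · exact integral_norm_rpow_le_of_tendstoInMeasure hp
      (tendstoInMeasure_restrict_of_tendsto_iSup_measure_window H hEW) hu.restrict
      (fun k => ((huk k).integrableOn_window t).mono_set hEW)
      fun k => hsmall _ ⟨k, rfl⟩ t E hE hEW hvol
  · exact hsmall _ ⟨k, rfl⟩ t E hE hEW hvol

lemma SIntegral_sub_le_of_measure_window_le (hp : 1 ≤ p) {v w : ℝ → X} (hv : MemLploc p v)
    (hw : MemLploc p w) {t η δ c : ℝ} (hη : 0 ≤ η)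
    (hbad : volume {s ∈ Ioo t (t + 1) | η ≤ ‖v s - w s‖} ≤ ENNReal.ofReal δ)
    (hvE : ∀ E : Set ℝ, MeasurableSet E → E ⊆ Ioo t (t + 1) → volume E ≤ ENNReal.ofReal δ →
      ∫ s in E, ‖v s‖ ^ p ≤ c)
    (hwE : ∀ E : Set ℝ, MeasurableSet E → E ⊆ Ioo t (t + 1) → volume E ≤ ENNReal.ofReal δ →
      ∫ s in E, ‖w s‖ ^ p ≤ c) :
    SIntegral p (v - w) t ≤ 2 ^ (p - 1) * (c + c) + η ^ p := by
  set W := Ioo t (t + 1)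
  set E := toMeasurable volume {s ∈ W | η ≤ ‖v s - w s‖} ∩ W
  have hE : MeasurableSet E := (measurableSet_toMeasurable _ _).inter measurableSet_Ioo
  have hEW : E ⊆ W := inter_subset_right
  have hvolE : volume E ≤ ENNReal.ofReal δ :=
    (measure_mono inter_subset_left).trans ((measure_toMeasurable _).trans_le hbad)
  have hgood : ∀ s ∈ W \ E, ‖v s - w s‖ < η := fun s hs =>
    not_le.1 fun h => hs.2 ⟨subset_toMeasurable _ _ ⟨hs.1, h⟩, hs.1⟩
  have hW : volume.real W = 1 := by simp [W]
  calc SIntegral p (v - w) t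
      ≤ 2 ^ (p - 1) * ((∫ s in E, ‖v s‖ ^ p) + ∫ s in E, ‖w s‖ ^ p) + η ^ p * volume.real W := by
        rw [SIntegral_eq_setIntegral]
        exact setIntegral_norm_sub_rpow_le hp hη measurableSet_Ioo hE hEW measure_Ioo_lt_top.ne
          ((hv.sub hp hw).integrableOn_window t) ((hv.integrableOn_window t).mono_set hEW)
          ((hw.integrableOn_window t).mono_set hEW) hgood
    _ ≤ 2 ^ (p - 1) * (c + c) + η ^ p := by
        rw [hW, mul_one]
        gcongr
        exacts [hvE E hE hEW hvolE, hwE E hE hEW hvolE]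

end Stepanov

/-- Let `u, uₖ ∈ BS^p(ℝ,X)` with `{uₖ}` Stepanov `p`-uniformly integrable. Then
`‖uₖ - u‖_{S^p} → 0` iff for every `ε > 0`,
`sup_t meas{s ∈ (t,t+1) : ‖uₖ(s) - u(s)‖ ≥ ε} → 0` as `k → ∞`. -/
theorem stmt_12 (p : ℝ) (hp : 1 ≤ p) (u : ℝ → X) (uk : ℕ → ℝ → X)
    (hu : MemBSp p u) (huk : ∀ k, MemBSp p (uk k))
    (hUI : StepanovUI p (Set.range uk)) :
    Tendsto (fun k => SNorm p (fun t => uk k t - u t)) atTop (𝓝 0) ↔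
      ∀ ε > (0:ℝ), Tendsto
        (fun k => ⨆ t : ℝ, volume {s ∈ Ioo t (t + 1) | ε ≤ ‖uk k s - u s‖})
        atTop (𝓝 (0 : ℝ≥0∞)) := by
  have hp0 : 0 < p := by linarith
  refine ⟨fun h ε hε => tendsto_iSup_measure_window_of_tendsto_SNorm (v := fun k t => uk k t - u t)
    hp0 (fun k => (huk k).sub hp hu) h hε, fun H => ?_⟩
  have hUI' := hUI.insert_of_tendsto_iSup_measure_window hp0 (fun k => (huk k).1) hu.1.1 H
  refine tendsto_SNorm_zero_of_forall_SIntegral_le hp0 fun η hη => ?_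
  obtain ⟨δ, hδ, hsmall⟩ := hUI' (η / 4 / 2 ^ (p - 1)) (by positivity)
  have hroot : ((η / 2) ^ (1 / p)) ^ p = η / 2 := by
    rw [← Real.rpow_mul (by positivity), one_div_mul_cancel hp0.ne', Real.rpow_one]
  filter_upwards [(H ((η / 2) ^ (1 / p)) (by positivity)).eventually_lt_const
    (ENNReal.ofReal_pos.2 hδ)] with k hk t
  calc SIntegral p (uk k - u) t ≤ 2 ^ (p - 1) * (η / 4 / 2 ^ (p - 1) + η / 4 / 2 ^ (p - 1))
        + ((η / 2) ^ (1 / p)) ^ p :=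
        SIntegral_sub_le_of_measure_window_le hp (huk k).1 hu.1 (by positivity)
          ((le_iSup _ t).trans hk.le) (hsmall _ (mem_insert_of_mem _ ⟨k, rfl⟩) t)
          (hsmall u (mem_insert _ _) t)
    _ = η := by
        rw [hroot]
        field_simp
        ring
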